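/- If X is a k-space and C is a compact Hausdorff space, then the product space X × C (with the usual product topology) is a k-space, i.e. X × C = X ×_k C where ×_k denotes the k-ified product. -/

import Mathlib

/-!
Let `U` be open in the k-ification of `X × C` and `(x₀, c₀) ∈ U`. The fibre of `U` over `x₀` is
open in `C`, so it contains a compact neighbourhood `t` of `c₀`. The set of `x` with
`{x} × t ⊆ U` is k-open in `X`: for a test map `f : K → X`, the map `f × id : K × C → X × C` is
again a test map because `K × C` is compact Hausdorff, and the tube lemma for the compact set `t`
makes the pull-back open in `K`. As `X` is a k-space this set is open, and its product with the
interior of `t` is a product neighbourhood of `(x₀, c₀)` inside `U`.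
-/

open TopologicalSpace Topology

universe u

/-- The k-ification: the final topology on `X` relative to all continuous maps
from compact Hausdorff spaces into `X`. -/
def kTop (X : Type u) [TopologicalSpace X] : TopologicalSpace X :=
  ⨆ (C : CompHaus.{u}) (g : C → X) (_ : Continuous g),
    TopologicalSpace.coinduced g inferInstance

lemma kTop_le (X : Type u) [tX : TopologicalSpace X] : kTop X ≤ tX :=
  iSup_le fun _ => iSup_le fun _ => iSup_le fun hg => hg.coinduced_le

lemma isOpen_kTop_iff {X : Type u} [TopologicalSpace X] {U : Set X} :
    IsOpen[kTop X] U ↔ ∀ (K : CompHaus.{u}) (g : K → X), Continuous g → IsOpen (g ⁻¹' U) := by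
  rw [kTop]
  simp only [isOpen_iSup_iff, isOpen_coinduced]

lemma IsCompact.isOpen_setOf_forall_mem_prod {X Y : Type*} [TopologicalSpace X]
    [TopologicalSpace Y] {t : Set Y} (ht : IsCompact t) {W : Set (X × Y)} (hW : IsOpen W) :
    IsOpen {x | ∀ y ∈ t, (x, y) ∈ W} :=
  isOpen_iff_eventually.2 fun _ hx =>
    ht.eventually_forall_of_forall_eventually fun y hy => hW.mem_nhds (hx y hy)

lemma isOpen_kTop_setOf_forall_mem {X C : Type u} [TopologicalSpace X] [TopologicalSpace C]
    [CompactSpace C] [T2Space C] {t : Set C} (ht : IsCompact t) {U : Set (X × C)}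
    (hU : IsOpen[kTop (X × C)] U) : IsOpen[kTop X] {x | ∀ c ∈ t, (x, c) ∈ U} := by
  rw [isOpen_kTop_iff] at hU ⊢
  intro K f hf
  exact ht.isOpen_setOf_forall_mem_prod
    (hU (CompHaus.of (K × C)) (Prod.map f id) (hf.prodMap continuous_id))

theorem kSpace_prod_compHaus {X C : Type u}
    [tX : TopologicalSpace X] [tC : TopologicalSpace C]
    [CompactSpace C] [T2Space C] (hX : kTop X = tX) :
    kTop (X × C) = (inferInstance : TopologicalSpace (X × C)) := by
  refine le_antisymm (kTop_le _) (isOpen_implies_isOpen_iff.1 fun U hU => ?_)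
  refine isOpen_prod_iff.2 fun x₀ c₀ hU₀ => ?_
  have hfiber : IsOpen {c : C | (x₀, c) ∈ U} :=
    isOpen_kTop_iff.1 hU (CompHaus.of C) _ (Continuous.prodMk_right x₀)
  obtain ⟨t, ht, htU, htc⟩ := local_compact_nhds (hfiber.mem_nhds hU₀)
  have hV : IsOpen {x | ∀ c ∈ t, (x, c) ∈ U} := hX ▸ isOpen_kTop_setOf_forall_mem htc hU
  exact ⟨_, interior t, hV, isOpen_interior, fun c hc => htU hc,
    mem_interior_iff_mem_nhds.2 ht, fun p hp => hp.1 p.2 (interior_subset hp.2)⟩
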